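/- There exists a MAGNN M such that no FOL program is equivalent to M; that is, there is a MAGNN M such that for every FOL program α there exists a dataset D with T_α(D) ≠ T_M(D). (Such an M is given by the 1-layer MAGNN, over a signature with one unary predicate U and one binary predicate P, for which U(a) ∈ T_M(D) if and only if at least half of the P-successors of a in D satisfy U.) -/

import Mathlib

open scoped BigOperators

namespace KG

/-- A fact over a signature with `δ` unary predicates (indexed by `Fin δ`) and
binary predicates indexed by `Col`; constants are natural numbers. -/
inductive Fact (δ : ℕ) (Col : Type) where
  | unary : Fin δ → ℕ → Fact δ Col
  | binary : Col → ℕ → ℕ → Fact δ Col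
deriving DecidableEq

/-- A dataset is a finite set of facts. -/
abbrev Dataset (δ : ℕ) (Col : Type) [DecidableEq Col] := Finset (Fact δ Col)

variable {δ : ℕ} {Col : Type} [DecidableEq Col] [Fintype Col]

/-- The (finite) set of constants occurring in a dataset. -/
def conD (D : Dataset δ Col) : Finset ℕ :=
  D.biUnion fun f =>
    match f with
    | .unary _ a => {a}
    | .binary _ a b => {a, b}

/-- The `P`-successors of `a` in `D`. -/
def nbrs (D : Dataset δ Col) (P : Col) (a : ℕ) : Finset ℕ :=
  (conD D).filter fun d => Fact.binary P a d ∈ D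

/-- A mean-aggregation GNN with `L ≥ 1` layers, over the signature with `δ` unary
predicates and binary predicates `Col`.  `dims ℓ` is the dimension of the layer-`ℓ`
vectors, with `dims 0 = dims L = δ`; `A ℓ` and `B P ℓ` are the matrices and `bias ℓ`
the bias vector used to compute the layer-`(ℓ+1)` vectors; `act ℓ` is the
(monotonically increasing, continuous, non-negatively valued) activation function
applied there, and `t` is the classification threshold. -/
structure GNN (δ : ℕ) (Col : Type) where
  L : ℕ
  hL : 1 ≤ L
  dims : ℕ → ℕ
  dims0 : dims 0 = δ
  dimsL : dims L = δ
  A : (ℓ : ℕ) → Matrix (Fin (dims (ℓ + 1))) (Fin (dims ℓ)) ℝ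
  B : Col → (ℓ : ℕ) → Matrix (Fin (dims (ℓ + 1))) (Fin (dims ℓ)) ℝ
  bias : (ℓ : ℕ) → Fin (dims (ℓ + 1)) → ℝ
  act : ℕ → ℝ → ℝ
  act_mono : ∀ ℓ, Monotone (act ℓ)
  act_cont : ∀ ℓ, Continuous (act ℓ)
  act_nonneg : ∀ ℓ x, 0 ≤ act ℓ x
  t : ℝ

/-- The layer-`ℓ` vector that the GNN `M` assigns to the constant `a` on input
dataset `D`.  The mean of an empty family is the zero vector (`0 / 0 = 0` in `ℝ`). -/
noncomputable def GNN.val (M : GNN δ Col) (D : Dataset δ Col) :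
    (ℓ : ℕ) → ℕ → Fin (M.dims ℓ) → ℝ
  | 0, a, i => if Fact.unary (Fin.cast M.dims0 i) a ∈ D then (1 : ℝ) else 0
  | ℓ + 1, a, i =>
      M.act ℓ (M.bias ℓ i
        + (M.A ℓ).mulVec (fun j => M.val D ℓ a j) i
        + ∑ P : Col, (M.B P ℓ).mulVec
            (fun j => (∑ d ∈ nbrs D P a, M.val D ℓ d j) / ((nbrs D P a).card : ℝ)) i)

/-- The dataset transformation induced by the GNN `M`:
`T_M(D) = { Uᵢ(a) : a ∈ con(D), v^a_L[i] ≥ t }`. -/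
def GNN.T (M : GNN δ Col) (D : Dataset δ Col) : Set (Fact δ Col) :=
  { f | ∃ (A : Fin δ) (a : ℕ), f = Fact.unary A a ∧ a ∈ conD D ∧
      M.t ≤ M.val D M.L a (Fin.cast M.dimsL.symm A) }

/-- A GNN is monotonic (is a MAGNN) if all matrix entries are non-negative. -/
def GNN.Monotonic (M : GNN δ Col) : Prop :=
  (∀ ℓ i j, 0 ≤ M.A ℓ i j) ∧ (∀ P ℓ i j, 0 ≤ M.B P ℓ i j)

/-- Concepts in the syntax `C ::= ⊤ | A | C ⊓ C' | C ⊔ C' | ≥ₙ P.C`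
(`∃P.C` is `≥₁ P.C`); ELUQ concepts are those in which every `≥ₙ` has `n ≥ 1`. -/
inductive Concept (δ : ℕ) (Col : Type) where
  | top : Concept δ Col
  | atom : Fin δ → Concept δ Col
  | and : Concept δ Col → Concept δ Col → Concept δ Col
  | or : Concept δ Col → Concept δ Col → Concept δ Col
  | atLeast : ℕ → Col → Concept δ Col → Concept δ Col
deriving DecidableEq

/-- A concept is a (well-formed) ELUQ concept when every `≥ₙ` has `n` a positive integer. -/
inductive ELUQ : Concept δ Col → Prop
  | top : ELUQ .top
  | atom (A : Fin δ) : ELUQ (.atom A)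
  | and {C₁ C₂} : ELUQ C₁ → ELUQ C₂ → ELUQ (.and C₁ C₂)
  | or {C₁ C₂} : ELUQ C₁ → ELUQ C₂ → ELUQ (.or C₁ C₂)
  | atLeast {C} (n : ℕ) (P : Col) (hn : 1 ≤ n) : ELUQ C → ELUQ (.atLeast n P C)

/-- Satisfaction of a concept by a constant over a dataset. -/
def sat (D : Dataset δ Col) : ℕ → Concept δ Col → Prop
  | _, .top => True
  | c, .atom A => Fact.unary A c ∈ D
  | c, .and C₁ C₂ => sat D c C₁ ∧ sat D c C₂
  | c, .or C₁ C₂ => sat D c C₁ ∨ sat D c C₂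
  | c, .atLeast n P C =>
      ∃ S : Finset ℕ, S.card = n ∧ ∀ d ∈ S, Fact.binary P c d ∈ D ∧ sat D d C

/-- A rule `C ⊑ A`. -/
structure Rule (δ : ℕ) (Col : Type) where
  body : Concept δ Col
  head : Fin δ
deriving DecidableEq

/-- Immediate consequences of a rule on a dataset. -/
def Rule.T (r : Rule δ Col) (D : Dataset δ Col) : Set (Fact δ Col) :=
  { f | ∃ a : ℕ, f = Fact.unary r.head a ∧ a ∈ conD D ∧ sat D a r.body }

/-- A rule is sound for a GNN if its consequences are always among the GNN's. -/
def Sound (r : Rule δ Col) (M : GNN δ Col) : Prop :=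
  ∀ D : Dataset δ Col, r.T D ⊆ M.T D


open FirstOrder

/-- The relation symbols of the first-order language corresponding to the
signature with one unary predicate and one binary predicate. -/
inductive Rels : ℕ → Type
  | U : Rels 1
  | P : Rels 2

/-- The relational first-order language with a single unary relation symbol `U`
and a single binary relation symbol `P` (equality is part of first-order logic). -/
def Lang : FirstOrder.Language := ⟨fun _ => Empty, Rels⟩

/-- A dataset over the signature with one unary and one binary predicate, viewed
as a finite first-order structure with domain `con(D)`. -/
def dsStructure (D : Dataset 1 Unit) : Lang.Structure {x : ℕ // x ∈ conD D} where
  funMap := fun {n} f _ => f.elim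
  RelMap := fun {n} r =>
    match r with
    | .U => fun v => Fact.unary 0 (v 0).1 ∈ D
    | .P => fun v => Fact.binary () (v 0).1 (v 1).1 ∈ D

/-- Immediate consequences of a FOL rule `B → A(x)` (a formula with one free
variable paired with a unary predicate) on a dataset:
`T_r(D) = { A(a) : a ∈ con(D), D ⊨ B[a] }`. -/
def folT (r : Lang.Formula (Fin 1) × Fin 1) (D : Dataset 1 Unit) :
    Set (Fact 1 Unit) :=
  { f | ∃ a : {x : ℕ // x ∈ conD D}, f = Fact.unary r.2 a.1 ∧
      @FirstOrder.Language.Formula.Realize Lang _ (dsStructure D) (Fin 1) r.1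
        fun _ => a }

/-! ### Auxiliary development for Statement 4 -/

section Statement4Aux

open FirstOrder FirstOrder.Language

/-- The star dataset: center `0`, `U`-leaves `1..n`, plain leaves `n+1..n+m`. -/
def star (n m : ℕ) : Dataset 1 Unit :=
  ((Finset.range n).image fun i => Fact.unary (0 : Fin 1) (i+1)) ∪
  ((Finset.range (n+m)).image fun i => Fact.binary () 0 (i+1))

lemma unary_mem_star {n m a : ℕ} {A : Fin 1} :
    Fact.unary A a ∈ star n m ↔ 1 ≤ a ∧ a ≤ n := by
  simp only [star, Finset.mem_union, Finset.mem_image, Finset.mem_range]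
  constructor
  · rintro (⟨i, hi, h⟩ | ⟨i, hi, h⟩)
    · rw [Fact.unary.injEq] at h; omega
    · exact absurd h (by simp)
  · rintro ⟨h1, h2⟩
    refine Or.inl ⟨a - 1, by omega, ?_⟩
    rw [Fact.unary.injEq]
    exact ⟨Subsingleton.elim _ _, by omega⟩

lemma binary_mem_star {n m a b : ℕ} :
    Fact.binary () a b ∈ star n m ↔ a = 0 ∧ 1 ≤ b ∧ b ≤ n + m := by
  simp only [star, Finset.mem_union, Finset.mem_image, Finset.mem_range]
  constructor
  · rintro (⟨i, hi, h⟩ | ⟨i, hi, h⟩)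
    · exact absurd h (by simp)
    · rw [Fact.binary.injEq] at h; omega
  · rintro ⟨rfl, h1, h2⟩
    exact Or.inr ⟨b - 1, by omega, by rw [Fact.binary.injEq]; exact ⟨rfl, rfl, by omega⟩⟩

lemma mem_conD_star {n m x : ℕ} (h : 1 ≤ n + m) :
    x ∈ conD (star n m) ↔ x ≤ n + m := by
  simp only [conD, Finset.mem_biUnion]
  constructor
  · rintro ⟨f, hf, hx⟩
    cases f with
    | unary A a =>
      rw [unary_mem_star] at hf
      simp only [Finset.mem_singleton] at hx; omega
    | binary P a b =>
      rw [binary_mem_star] at hf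
      simp only [Finset.mem_insert, Finset.mem_singleton] at hx; omega
  · intro hx
    rcases Nat.eq_zero_or_pos x with rfl | hpos
    · exact ⟨Fact.binary () 0 1, binary_mem_star.mpr ⟨rfl, le_refl 1, h⟩, by simp⟩
    · exact ⟨Fact.binary () 0 x, binary_mem_star.mpr ⟨rfl, hpos, hx⟩, by simp⟩

/-- The majority MAGNN: one layer, `A = 0`, `B = 1`, bias `0`, ReLU, threshold `1/2`. -/
noncomputable def M0 : GNN 1 Unit where
  L := 1
  hL := le_refl 1
  dims := fun _ => 1
  dims0 := rfl
  dimsL := rfl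
  A := fun _ => 0
  B := fun _ _ => 1
  bias := fun _ _ => 0
  act := fun _ x => max x 0
  act_mono := fun _ _ _ h => max_le_max h (le_refl 0)
  act_cont := fun _ => continuous_id.max continuous_const
  act_nonneg := fun _ x => le_max_right x 0
  t := 1/2

lemma M0_monotonic : M0.Monotonic := by
  constructor
  · intro ℓ i j; simp [M0]; exact le_refl _
  · intro P ℓ i j
    simp only [M0, Matrix.one_apply]
    show (0:ℝ) ≤ @ite ℝ (@Eq (Fin 1) i j) (instDecidableEqFin 1 i j) 1 0
    split <;> norm_num

lemma fin_one_eq (i j : Fin 1) : i = j := by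
  have h1 := i.isLt; have h2 := j.isLt
  apply Fin.ext; omega

lemma val0_eq (D : Dataset 1 Unit) (a : ℕ) (i : Fin (M0.dims 0)) :
    M0.val D 0 a i = if Fact.unary 0 a ∈ D then (1:ℝ) else 0 := by
  show (if Fact.unary (Fin.cast M0.dims0 i) a ∈ D then (1:ℝ) else 0) = _
  rw [fin_one_eq (Fin.cast M0.dims0 i) 0]

lemma val1_eq (D : Dataset 1 Unit) (a : ℕ) (i : Fin (M0.dims 1)) :
    M0.val D 1 a i =
      max ((∑ d ∈ nbrs D () a, if Fact.unary 0 d ∈ D then (1:ℝ) else 0)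
            / ((nbrs D () a).card : ℝ)) 0 := by
  rw [GNN.val]
  have h1 : M0.act 0 = fun x => max x 0 := rfl
  have h2 : M0.bias 0 i = 0 := rfl
  have h3 : (M0.A 0).mulVec (fun j => M0.val D 0 a j) i = 0 := by
    show Matrix.mulVec (0 : Matrix (Fin 1) (Fin 1) ℝ) (fun j : Fin 1 => M0.val D 0 a j) (i : Fin 1) = 0
    rw [Matrix.zero_mulVec]
    rfl
  have h4 : (∑ P : Unit, (M0.B P 0).mulVec
        (fun j => (∑ d ∈ nbrs D P a, M0.val D 0 d j) / ((nbrs D P a).card : ℝ)) i)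
      = (∑ d ∈ nbrs D () a, if Fact.unary 0 d ∈ D then (1:ℝ) else 0)
          / ((nbrs D () a).card : ℝ) := by
    rw [Finset.univ_unique, Finset.sum_singleton]
    show Matrix.mulVec (1 : Matrix (Fin 1) (Fin 1) ℝ) (fun j : Fin 1 => (∑ d ∈ nbrs D () a, M0.val D 0 d j) / ((nbrs D () a).card : ℝ)) (i : Fin 1) = _
    rw [Matrix.one_mulVec]
    show (∑ d ∈ nbrs D () a, M0.val D 0 d i) / ((nbrs D () a).card : ℝ) = _
    rw [Finset.sum_congr rfl fun d _ => val0_eq D d i]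
  rw [h1, h2, h3, h4]
  rw [zero_add, zero_add]

lemma nbrs_star_center {n m : ℕ} (h : 1 ≤ n + m) :
    nbrs (star n m) () 0 = Finset.Icc 1 (n + m) := by
  ext d
  simp only [nbrs, Finset.mem_filter, mem_conD_star h, binary_mem_star, Finset.mem_Icc,
    eq_self_iff_true, true_and]
  omega

lemma nbrs_star_leaf {n m a : ℕ} (h : a ≠ 0) : nbrs (star n m) () a = ∅ := by
  ext d
  simp only [nbrs, Finset.mem_filter, binary_mem_star, Finset.notMem_empty, iff_false]
  rintro ⟨-, h0, -⟩
  exact h h0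

lemma val1_center {n m : ℕ} (h : 1 ≤ n + m) (i : Fin (M0.dims 1)) :
    M0.val (star n m) 1 0 i = (n : ℝ) / ((n : ℝ) + m) := by
  rw [val1_eq, nbrs_star_center h]
  have hsum : (∑ d ∈ Finset.Icc 1 (n+m), if Fact.unary (0 : Fin 1) d ∈ star n m then (1:ℝ) else 0)
      = ((Finset.Icc 1 n).card : ℝ) := by
    rw [Finset.sum_boole]
    norm_cast
    congr 1
    ext d
    simp only [Finset.mem_filter, Finset.mem_Icc, unary_mem_star]
    omega
  rw [hsum, Nat.card_Icc, Nat.card_Icc]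
  have : ((n + 1 - 1 : ℕ) : ℝ) = n := by norm_num
  rw [this]
  have : ((n + m + 1 - 1 : ℕ) : ℝ) = (n : ℝ) + m := by push_cast; ring
  rw [this]
  apply max_eq_left
  positivity

lemma mem_T_star {n m : ℕ} (hn : 1 ≤ n) (hm : m ≤ n) :
    Fact.unary 0 0 ∈ M0.T (star n m) := by
  refine ⟨0, 0, rfl, (mem_conD_star (by omega)).mpr (by omega), ?_⟩
  show (1/2 : ℝ) ≤ M0.val (star n m) 1 0 _
  refine le_of_le_of_eq ?_ (val1_center (n := n) (m := m) (by omega) _).symm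
  rw [div_le_div_iff₀ (by norm_num) (by positivity)]
  have hm' : (m : ℝ) ≤ n := by exact_mod_cast hm
  linarith

lemma not_mem_T_star {n m : ℕ} (hn : 1 ≤ n) (hnm : n < m) :
    Fact.unary 0 0 ∉ M0.T (star n m) := by
  rintro ⟨A, a, hf, ha, ht⟩
  rw [Fact.unary.injEq] at hf
  obtain ⟨-, rfl⟩ := hf
  replace ht : (1/2 : ℝ) ≤ M0.val (star n m) 1 0 _ := ht
  replace ht := ht.trans_eq (val1_center (n := n) (m := m) (by omega) _)
  rw [div_le_div_iff₀ (by norm_num) (by positivity)] at ht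
  have hm' : (n : ℝ) < m := by exact_mod_cast hnm
  linarith

/-! ### First-order inexpressibility via an EF-style induction -/

lemma term_var {β : Type*} (t : Lang.Term β) : ∃ i, t = Term.var i := by
  cases t with
  | var i => exact ⟨i, rfl⟩
  | func f _ => exact Empty.elim f

/-- Quantifier depth of a bounded formula. -/
def fsize : ∀ {k : ℕ}, Lang.BoundedFormula (Fin 1) k → ℕ
  | _, .falsum => 0
  | _, .equal _ _ => 0
  | _, .rel _ _ => 0
  | _, .imp φ ψ => max (fsize φ) (fsize ψ)
  | _, .all φ => fsize φ + 1

/-- The first-order structure on the constants of `star n m`. -/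
abbrev SS (n m : ℕ) := {x : ℕ // x ∈ conD (star n m)}

noncomputable instance instSS (n m : ℕ) : Lang.Structure (SS n m) := dsStructure (star n m)

/-- Partial-isomorphism agreement between tuples in two star structures. -/
def Agree (n₁ m₁ n₂ m₂ : ℕ) {ι : Type*} (w1 : ι → SS n₁ m₁) (w2 : ι → SS n₂ m₂) : Prop :=
  (∀ i j, w1 i = w1 j ↔ w2 i = w2 j) ∧
  (∀ i, (w1 i).1 = 0 ↔ (w2 i).1 = 0) ∧
  (∀ i, (w1 i).1 ≤ n₁ ↔ (w2 i).1 ≤ n₂)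

lemma Agree.symm {n₁ m₁ n₂ m₂ : ℕ} {ι : Type*} {w1 : ι → SS n₁ m₁} {w2 : ι → SS n₂ m₂}
    (h : Agree n₁ m₁ n₂ m₂ w1 w2) : Agree n₂ m₂ n₁ m₁ w2 w1 :=
  ⟨fun i j => (h.1 i j).symm, fun i => (h.2.1 i).symm, fun i => (h.2.2 i).symm⟩

lemma agree_extend {n₁ m₁ n₂ m₂ : ℕ} (h2 : 1 ≤ n₂ + m₂) {ι : Type*} [Fintype ι]
    (hn2 : Fintype.card ι + 1 ≤ n₂) (hm2 : Fintype.card ι + 1 ≤ m₂)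
    {w1 : ι → SS n₁ m₁} {w2 : ι → SS n₂ m₂} (hA : Agree n₁ m₁ n₂ m₂ w1 w2) (x1 : SS n₁ m₁) :
    ∃ x2 : SS n₂ m₂, (∀ i, w1 i = x1 ↔ w2 i = x2) ∧
      ((x1 : ℕ) = 0 ↔ (x2 : ℕ) = 0) ∧ ((x1 : ℕ) ≤ n₁ ↔ (x2 : ℕ) ≤ n₂) := by
  by_cases hex : ∃ i, w1 i = x1
  · obtain ⟨i0, hi0⟩ := hex
    refine ⟨w2 i0, fun i => ?_, ?_, ?_⟩
    · rw [← hi0]; exact hA.1 i i0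
    · rw [← hi0]; exact hA.2.1 i0
    · rw [← hi0]; exact hA.2.2 i0
  · push_neg at hex
    by_cases hc : (x1 : ℕ) = 0
    · refine ⟨⟨0, (mem_conD_star h2).mpr (by omega)⟩, fun i => ?_, by simp [hc], ?_⟩
      · constructor
        · intro h; exact absurd h (hex i)
        · intro h
          have h0 : (w1 i).1 = 0 := (hA.2.1 i).mpr (by rw [h])
          exact absurd (Subtype.ext (h0.trans hc.symm)) (hex i)
      · simp only [hc]; omega
    · have hcard : (Finset.image (fun i => (w2 i).1) Finset.univ).card ≤ Fintype.card ι := by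
        refine Finset.card_image_le.trans ?_
        simp
      by_cases hle : (x1 : ℕ) ≤ n₁
      · -- fresh U-leaf
        have hns : ¬ Finset.Icc 1 n₂ ⊆ Finset.image (fun i => (w2 i).1) Finset.univ := by
          intro hsub
          have := Finset.card_le_card hsub
          rw [Nat.card_Icc] at this
          omega
        rw [Finset.not_subset] at hns
        obtain ⟨c, hc1, hc2⟩ := hns
        rw [Finset.mem_Icc] at hc1
        refine ⟨⟨c, (mem_conD_star h2).mpr (by omega)⟩, fun i => ?_, by simp; omega, by simp; omega⟩
        constructor
        · intro h; exact absurd h (hex i)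
        · intro h
          exfalso
          apply hc2
          rw [Finset.mem_image]
          exact ⟨i, Finset.mem_univ i, by rw [h]⟩
      · -- fresh plain leaf
        have hns : ¬ Finset.Icc (n₂+1) (n₂+m₂) ⊆ Finset.image (fun i => (w2 i).1) Finset.univ := by
          intro hsub
          have := Finset.card_le_card hsub
          rw [Nat.card_Icc] at this
          omega
        rw [Finset.not_subset] at hns
        obtain ⟨c, hc1, hc2⟩ := hns
        rw [Finset.mem_Icc] at hc1
        refine ⟨⟨c, (mem_conD_star h2).mpr (by omega)⟩, fun i => ?_, by simp; omega, by simp; omega⟩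
        constructor
        · intro h; exact absurd h (hex i)
        · intro h
          exfalso
          apply hc2
          rw [Finset.mem_image]
          exact ⟨i, Finset.mem_univ i, by rw [h]⟩

/-- Reindexing used to analyse `Sum.elim v (Fin.snoc xs x)`. -/
def reidx {k : ℕ} : Fin 1 ⊕ Fin (k+1) → Option (Fin 1 ⊕ Fin k)
  | .inl a => some (.inl a)
  | .inr j => if h : j = Fin.last k then none else some (.inr (j.castPred h))

lemma elim_snoc {S : Type*} {k : ℕ} (v : Fin 1 → S) (xs : Fin k → S) (x : S)
    (i : Fin 1 ⊕ Fin (k+1)) :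
    Sum.elim v (Fin.snoc xs x) i = Option.elim (reidx i) x (Sum.elim v xs) := by
  cases i with
  | inl a => rfl
  | inr j =>
    rcases eq_or_ne j (Fin.last k) with rfl | h
    · simp [reidx, Fin.snoc_last]
    · simp only [reidx, dif_neg h, Option.elim, Sum.elim_inr, Sum.elim_inl]
      conv_lhs => rw [← Fin.castSucc_castPred j h]
      rw [Fin.snoc_castSucc]

lemma agree_snoc {n₁ m₁ n₂ m₂ k : ℕ} {v1 : Fin 1 → SS n₁ m₁} {xs1 : Fin k → SS n₁ m₁}
    {v2 : Fin 1 → SS n₂ m₂} {xs2 : Fin k → SS n₂ m₂} {x1 : SS n₁ m₁} {x2 : SS n₂ m₂}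
    (hA : Agree n₁ m₁ n₂ m₂ (Sum.elim v1 xs1) (Sum.elim v2 xs2))
    (he : ∀ i, Sum.elim v1 xs1 i = x1 ↔ Sum.elim v2 xs2 i = x2)
    (hc : (x1 : ℕ) = 0 ↔ (x2 : ℕ) = 0) (hl : (x1 : ℕ) ≤ n₁ ↔ (x2 : ℕ) ≤ n₂) :
    Agree n₁ m₁ n₂ m₂ (Sum.elim v1 (Fin.snoc xs1 x1)) (Sum.elim v2 (Fin.snoc xs2 x2)) := by
  refine ⟨fun i j => ?_, fun i => ?_, fun i => ?_⟩
  · rw [elim_snoc, elim_snoc, elim_snoc, elim_snoc]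
    rcases reidx i with _ | i' <;> rcases reidx j with _ | j' <;>
      simp only [Option.elim]
    · exact eq_comm.trans ((he j').trans eq_comm)
    · exact he i'
    · exact hA.1 i' j'
  · rw [elim_snoc, elim_snoc]
    rcases reidx i with _ | i' <;> simp only [Option.elim]
    · exact hc
    · exact hA.2.1 i'
  · rw [elim_snoc, elim_snoc]
    rcases reidx i with _ | i' <;> simp only [Option.elim]
    · exact hl
    · exact hA.2.2 i'

lemma ef_main {n₁ m₁ n₂ m₂ : ℕ} (h1 : 1 ≤ n₁ + m₁) (h2 : 1 ≤ n₂ + m₂)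
    {k : ℕ} (φ : Lang.BoundedFormula (Fin 1) k) :
    fsize φ + k + 2 ≤ n₁ → fsize φ + k + 2 ≤ n₂ →
    fsize φ + k + 2 ≤ m₁ → fsize φ + k + 2 ≤ m₂ →
    ∀ (v1 : Fin 1 → SS n₁ m₁) (xs1 : Fin k → SS n₁ m₁)
      (v2 : Fin 1 → SS n₂ m₂) (xs2 : Fin k → SS n₂ m₂),
      Agree n₁ m₁ n₂ m₂ (Sum.elim v1 xs1) (Sum.elim v2 xs2) →
      (φ.Realize v1 xs1 ↔ φ.Realize v2 xs2) := by
  induction φ with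
  | falsum =>
    intro _ _ _ _ v1 xs1 v2 xs2 hA
    exact Iff.rfl
  | equal t1 t2 =>
    intro _ _ _ _ v1 xs1 v2 xs2 hA
    obtain ⟨i, rfl⟩ := term_var t1
    obtain ⟨j, rfl⟩ := term_var t2
    show Sum.elim v1 xs1 i = Sum.elim v1 xs1 j ↔ Sum.elim v2 xs2 i = Sum.elim v2 xs2 j
    exact hA.1 i j
  | rel R ts =>
    intro _ _ _ _ v1 xs1 v2 xs2 hA
    cases R with
    | U =>
      obtain ⟨i, hi⟩ := term_var (ts 0)
      have e1 : (BoundedFormula.rel Rels.U ts).Realize v1 xs1 ↔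
          Fact.unary (0 : Fin 1) ((ts 0).realize (Sum.elim v1 xs1)).1 ∈ star n₁ m₁ := Iff.rfl
      have e2 : (BoundedFormula.rel Rels.U ts).Realize v2 xs2 ↔
          Fact.unary (0 : Fin 1) ((ts 0).realize (Sum.elim v2 xs2)).1 ∈ star n₂ m₂ := Iff.rfl
      rw [e1, e2, hi]
      simp only [Term.realize_var]
      rw [unary_mem_star, unary_mem_star]
      have hc := hA.2.1 i
      have hl := hA.2.2 i
      omega
    | P =>
      obtain ⟨i, hi⟩ := term_var (ts 0)
      obtain ⟨j, hj⟩ := term_var (ts 1)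
      have e1 : (BoundedFormula.rel Rels.P ts).Realize v1 xs1 ↔
          Fact.binary () ((ts 0).realize (Sum.elim v1 xs1)).1
            ((ts 1).realize (Sum.elim v1 xs1)).1 ∈ star n₁ m₁ := Iff.rfl
      have e2 : (BoundedFormula.rel Rels.P ts).Realize v2 xs2 ↔
          Fact.binary () ((ts 0).realize (Sum.elim v2 xs2)).1
            ((ts 1).realize (Sum.elim v2 xs2)).1 ∈ star n₂ m₂ := Iff.rfl
      rw [e1, e2, hi, hj]
      simp only [Term.realize_var]
      rw [binary_mem_star, binary_mem_star]
      have hb1 : (Sum.elim v1 xs1 j).1 ≤ n₁ + m₁ :=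
        (mem_conD_star h1).mp (Sum.elim v1 xs1 j).2
      have hb2 : (Sum.elim v2 xs2 j).1 ≤ n₂ + m₂ :=
        (mem_conD_star h2).mp (Sum.elim v2 xs2 j).2
      have hci := hA.2.1 i
      have hcj := hA.2.1 j
      omega
  | imp φ ψ ih1 ih2 =>
    intro hn1 hn2 hm1 hm2 v1 xs1 v2 xs2 hA
    simp only [fsize] at hn1 hn2 hm1 hm2
    rw [BoundedFormula.realize_imp, BoundedFormula.realize_imp]
    exact imp_congr
      (ih1 (by omega) (by omega) (by omega) (by omega) v1 xs1 v2 xs2 hA)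
      (ih2 (by omega) (by omega) (by omega) (by omega) v1 xs1 v2 xs2 hA)
  | @all k' ψ ih =>
    intro hn1 hn2 hm1 hm2 v1 xs1 v2 xs2 hA
    simp only [fsize] at hn1 hn2 hm1 hm2
    rw [BoundedFormula.realize_all, BoundedFormula.realize_all]
    have hcards : Fintype.card (Fin 1 ⊕ Fin k') = 1 + k' := by
      rw [Fintype.card_sum, Fintype.card_fin, Fintype.card_fin]
    constructor
    · intro h x2
      obtain ⟨x1, he, hc, hl⟩ := agree_extend (n₂ := n₁) (m₂ := m₁) (by omega)
        (ι := Fin 1 ⊕ Fin k') (by omega) (by omega) hA.symm x2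
      have hA' := agree_snoc hA (fun i => (he i).symm) hc.symm hl.symm
      exact (ih (by omega) (by omega) (by omega) (by omega) v1 (Fin.snoc xs1 x1)
        v2 (Fin.snoc xs2 x2) hA').mp (h x1)
    · intro h x1
      obtain ⟨x2, he, hc, hl⟩ := agree_extend (by omega)
        (ι := Fin 1 ⊕ Fin k') (by omega) (by omega) hA x1
      have hA' := agree_snoc hA he hc hl
      exact (ih (by omega) (by omega) (by omega) (by omega) v1 (Fin.snoc xs1 x1)
        v2 (Fin.snoc xs2 x2) hA').mpr (h x2)

end Statement4Aux

/-- There exists a MAGNN `M` (over the signature with one unary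
and one binary predicate) such that no FOL program is equivalent to `M`: for every
finite set `α` of FOL rules there is a dataset `D` with `T_α(D) ≠ T_M(D)`. -/
theorem magnn_no_equivalent_fol_program :
    ∃ M : GNN 1 Unit, M.Monotonic ∧
      ∀ α : Set (Lang.Formula (Fin 1) × Fin 1), α.Finite →
        ∃ D : Dataset 1 Unit, (⋃ r ∈ α, folT r D) ≠ M.T D := by
  refine ⟨M0, M0_monotonic, ?_⟩
  intro α hα
  by_contra hcon
  push_neg at hcon
  set N := (hα.toFinset.sup fun r => fsize r.1) + 2 with hN
  have hN2 : 2 ≤ N := by omega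
  have hD1 := hcon (star N N)
  have hD2 := hcon (star N (N+1))
  have hmem : Fact.unary 0 0 ∈ M0.T (star N N) := mem_T_star (by omega) (le_refl N)
  rw [← hD1] at hmem
  simp only [Set.mem_iUnion] at hmem
  obtain ⟨r, hr, a, ha, hreal⟩ := hmem
  rw [Fact.unary.injEq] at ha
  have ha0 : (a : ℕ) = 0 := ha.2.symm
  have hsz : fsize r.1 ≤ hα.toFinset.sup fun r => fsize r.1 :=
    Finset.le_sup (f := fun r => fsize r.1) (hα.mem_toFinset.mpr hr)
  have hc2 : (0 : ℕ) ∈ conD (star N (N+1)) := (mem_conD_star (by omega)).mpr (by omega)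
  have key := ef_main (n₁ := N) (m₁ := N) (n₂ := N) (m₂ := N+1) (by omega) (by omega)
    (k := 0) r.1 (by omega) (by omega) (by omega) (by omega)
    (fun _ => a) default (fun _ => ⟨0, hc2⟩) default ?agr
  case agr =>
    refine ⟨fun i j => ?_, fun i => ?_, fun i => ?_⟩
    · rcases i with a' | b
      · rcases j with a'' | b
        · simp
        · exact b.elim0
      · exact b.elim0
    · rcases i with a' | b
      · simp [ha0]
      · exact b.elim0
    · rcases i with a' | b
      · simp [ha0]
      · exact b.elim0
  have hreal2 := key.mp hreal
  have hmem2 : Fact.unary 0 0 ∈ ⋃ r ∈ α, folT r (star N (N+1)) := by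
    refine Set.mem_biUnion hr ⟨⟨0, hc2⟩, ?_, hreal2⟩
    rw [Fact.unary.injEq]
    exact ⟨fin_one_eq _ _, rfl⟩
  rw [hD2] at hmem2
  exact not_mem_T_star (by omega) (by omega) hmem2


end KG
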